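/- (Regularity of the numerical solution.) In the setting of the exact conservation of the modified energy (linear force g = −Aq, self-adjoint A, filters with ψ₁ = sinc·φ, |ψ₁| ≤ c₀, |φ| ≤ c₀, 0 < h ≤ 1), the numerical solution satisfies (1/2)‖Ω q_n‖² + (1/2)‖q̇_n‖² ≤ (1/2)‖Ω q_0‖² + (1/2)‖q̇_0‖² + (C̆ + Ĉh²)(‖q_0‖² + ‖q_n‖²) for all n ∈ ℕ, with C̆ = (1/2)c₀²‖A‖ and Ĉ = (1/8)c₀⁴‖A‖². -/

import Mathlib

open scoped BigOperators

/-- `sinc ξ = sin ξ / ξ` with `sinc 0 = 1`. -/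
noncomputable def sinc (x : ℝ) : ℝ := if x = 0 then 1 else Real.sin x / x

/-- Entrywise (diagonal-matrix) action of a real function family on `ℂ^d`. -/
noncomputable def dOp {d : ℕ} (f : Fin d → ℝ) (q : EuclideanSpace ℂ (Fin d)) :
    EuclideanSpace ℂ (Fin d) := WithLp.toLp 2 (fun i => (f i : ℂ) * q i)

/-- Position update of the trigonometric integrator for the linear force `g(q) = -A q`:
`q_{n+1} = cos(hΩ) q_n + h sinc(hΩ) q̇_n + ½h² sinc(hΩ) Ψ₁ g(Φ q_n)`. -/
noncomputable def trigStepQ {d : ℕ} (h : ℝ) (ω : Fin d → ℝ) (ψ₁ φ : ℝ → ℝ)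
    (A : EuclideanSpace ℂ (Fin d) →L[ℂ] EuclideanSpace ℂ (Fin d))
    (q p : EuclideanSpace ℂ (Fin d)) : EuclideanSpace ℂ (Fin d) :=
  dOp (fun i => Real.cos (h * ω i)) q + h • dOp (fun i => sinc (h * ω i)) p
    + (h ^ 2 / 2) • dOp (fun i => sinc (h * ω i))
        (dOp (fun i => ψ₁ (h * ω i)) (-(A (dOp (fun i => φ (h * ω i)) q))))

/-- Velocity update of the trigonometric integrator for the linear force `g(q) = -A q`:
`q̇_{n+1} = -Ω sin(hΩ) q_n + cos(hΩ) q̇_n + ½h (cos(hΩ) Ψ₁ g(Φ q_n) + Ψ₁ g(Φ q_{n+1}))`. -/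
noncomputable def trigStepP {d : ℕ} (h : ℝ) (ω : Fin d → ℝ) (ψ₁ φ : ℝ → ℝ)
    (A : EuclideanSpace ℂ (Fin d) →L[ℂ] EuclideanSpace ℂ (Fin d))
    (q p : EuclideanSpace ℂ (Fin d)) : EuclideanSpace ℂ (Fin d) :=
  -(dOp (fun i => ω i * Real.sin (h * ω i)) q) + dOp (fun i => Real.cos (h * ω i)) p
    + (h / 2) • (dOp (fun i => Real.cos (h * ω i))
          (dOp (fun i => ψ₁ (h * ω i)) (-(A (dOp (fun i => φ (h * ω i)) q))))
        + dOp (fun i => ψ₁ (h * ω i))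
            (-(A (dOp (fun i => φ (h * ω i)) (trigStepQ h ω ψ₁ φ A q p)))))

/-- The modified energy
`ℋ(q,q̇) = ½‖Ωq‖² + ½‖q̇‖² + ½ Re((cos(hΩ)Φq)* A Φq) − ⅛h²‖Ψ₁ A Φq‖²`. -/
noncomputable def modEnergy {d : ℕ} (h : ℝ) (ω : Fin d → ℝ) (ψ₁ φ : ℝ → ℝ)
    (A : EuclideanSpace ℂ (Fin d) →L[ℂ] EuclideanSpace ℂ (Fin d))
    (q p : EuclideanSpace ℂ (Fin d)) : ℝ :=
  (1 / 2) * ‖dOp ω q‖ ^ 2 + (1 / 2) * ‖p‖ ^ 2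
    + (1 / 2) * (inner (𝕜 := ℂ) (dOp (fun i => Real.cos (h * ω i)) (dOp (fun i => φ (h * ω i)) q))
        (A (dOp (fun i => φ (h * ω i)) q))).re
    - (1 / 8) * h ^ 2 * ‖dOp (fun i => ψ₁ (h * ω i)) (A (dOp (fun i => φ (h * ω i)) q))‖ ^ 2

/-- The total energy `H(q,q̇) = ½‖Ωq‖² + ½‖q̇‖² + ½ q* A q` of `q̈ = -Ω²q - Aq`. -/
noncomputable def energy {d : ℕ} (ω : Fin d → ℝ)
    (A : EuclideanSpace ℂ (Fin d) →L[ℂ] EuclideanSpace ℂ (Fin d))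
    (q p : EuclideanSpace ℂ (Fin d)) : ℝ :=
  (1 / 2) * ‖dOp ω q‖ ^ 2 + (1 / 2) * ‖p‖ ^ 2 + (1 / 2) * (inner (𝕜 := ℂ) q (A q)).re

/-! The modified energy is exactly conserved by the scheme. In each coordinate the step is a
rotation of `(ω q, q̇)` perturbed by the filtered force, and `cos² ξ + (ξ sinc ξ)² = 1` reduces the
energy balance of one step to the cross terms `½ Re⟨B q_n, q_{n+1}⟩` and `½ Re⟨q_n, B q_{n+1}⟩`,
`B = ΦAΦ`, which coincide because `B` is self-adjoint. The modified energy differs from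
`½‖Ωq‖² + ½‖q̇‖²` by `½ Re⟨cos(hΩ)Φq, AΦq⟩ - ⅛h²‖Ψ₁AΦq‖²`, which is at most `(C̆ + Ĉh²)‖q‖²` in
absolute value since `|cos|, |φ|, |ψ₁|` are bounded by `1, c₀, c₀`; compare at steps `0` and `n`.
-/

lemma sin_eq_mul_sinc (x : ℝ) : Real.sin x = x * sinc x := by
  unfold sinc
  split_ifs with hx
  · simp [hx]
  · field_simp

lemma cos_sq_add_mul_sinc_sq (x : ℝ) : Real.cos x ^ 2 + (x * sinc x) ^ 2 = 1 := by
  rw [← sin_eq_mul_sinc, add_comm, Real.sin_sq_add_cos_sq]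

lemma trigStep_energy_identity {c s w h : ℝ} (hcs : c ^ 2 + (h * w * s) ^ 2 = 1)
    {q p b b₁ q₁ p₁ : ℂ}
    (hq₁ : q₁ = c * q + ((h * s : ℝ) : ℂ) * p - ((h ^ 2 / 2 * s ^ 2 : ℝ) : ℂ) * b)
    (hp₁ : p₁ = ((-(h * w ^ 2 * s) : ℝ) : ℂ) * q + c * p - ((h / 2 * c * s : ℝ) : ℂ) * b
      - ((h / 2 * s : ℝ) : ℂ) * b₁) :
    1 / 2 * w ^ 2 * Complex.normSq q₁ + 1 / 2 * Complex.normSq p₁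
        + 1 / 2 * c * (starRingEnd ℂ q₁ * b₁).re - 1 / 8 * h ^ 2 * s ^ 2 * Complex.normSq b₁
        + 1 / 2 * (starRingEnd ℂ b * q₁).re
      = 1 / 2 * w ^ 2 * Complex.normSq q + 1 / 2 * Complex.normSq p
        + 1 / 2 * c * (starRingEnd ℂ q * b).re - 1 / 8 * h ^ 2 * s ^ 2 * Complex.normSq b
        + 1 / 2 * (starRingEnd ℂ q * b₁).re := by
  -- `b₁` enters only through `c q₁ - h s (p₁ + h s b₁ / 2) = q`, a consequence of `hcs`
  subst hq₁ hp₁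
  simp only [map_add, map_sub, map_mul, Complex.conj_ofReal, Complex.normSq_apply,
    Complex.mul_re, Complex.mul_im, Complex.add_re, Complex.add_im, Complex.sub_re,
    Complex.sub_im, Complex.ofReal_re, Complex.ofReal_im, Complex.conj_re, Complex.conj_im]
  linear_combination (1 / 2 * (q.re * b₁.re + q.im * b₁.im)
      + 1 / 2 * w ^ 2 * (q.re ^ 2 + q.im ^ 2) + 1 / 2 * (p.re ^ 2 + p.im ^ 2)
      - h / 2 * s * (p.re * b.re + p.im * b.im) + h ^ 2 / 8 * s ^ 2 * (b.re ^ 2 + b.im ^ 2)) * hcs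

section DiagonalOperators

variable {d : ℕ}

@[simp]
lemma dOp_apply (f : Fin d → ℝ) (x : EuclideanSpace ℂ (Fin d)) (i : Fin d) :
    dOp f x i = f i * x i := rfl

lemma norm_sq_eq_sum_normSq (x : EuclideanSpace ℂ (Fin d)) :
    ‖x‖ ^ 2 = ∑ i, Complex.normSq (x i) := by
  simp only [EuclideanSpace.norm_sq_eq, Complex.sq_norm]

lemma inner_re_eq_sum (x y : EuclideanSpace ℂ (Fin d)) :
    (inner ℂ x y).re = ∑ i, (starRingEnd ℂ (x i) * y i).re := by
  rw [PiLp.inner_apply, Complex.re_sum]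
  simp only [RCLike.inner_apply']

lemma inner_dOp_left (f : Fin d → ℝ) (x y : EuclideanSpace ℂ (Fin d)) :
    inner ℂ (dOp f x) y = inner ℂ x (dOp f y) := by
  simp only [PiLp.inner_apply, RCLike.inner_apply', dOp_apply, map_mul, Complex.conj_ofReal]
  exact Finset.sum_congr rfl fun i _ => by ring

lemma norm_dOp_le {f : Fin d → ℝ} {M : ℝ} (hM0 : 0 ≤ M) (hM : ∀ i, |f i| ≤ M)
    (x : EuclideanSpace ℂ (Fin d)) : ‖dOp f x‖ ≤ M * ‖x‖ := by
  refine le_of_sq_le_sq ?_ (by positivity)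
  rw [mul_pow, norm_sq_eq_sum_normSq, norm_sq_eq_sum_normSq, Finset.mul_sum]
  refine Finset.sum_le_sum fun i _ => ?_
  rw [dOp_apply, Complex.normSq_mul, Complex.normSq_ofReal, ← sq]
  exact mul_le_mul_of_nonneg_right (sq_le_sq' (abs_le.mp (hM i)).1 (abs_le.mp (hM i)).2)
    (Complex.normSq_nonneg _)

/-- The operator `Φ A Φ` of the paper, for `Φ = dOp f`. -/
noncomputable def dSandwich (f : Fin d → ℝ)
    (A : EuclideanSpace ℂ (Fin d) →L[ℂ] EuclideanSpace ℂ (Fin d))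
    (x : EuclideanSpace ℂ (Fin d)) : EuclideanSpace ℂ (Fin d) :=
  dOp f (A (dOp f x))

lemma inner_dSandwich_right {f : Fin d → ℝ}
    {A : EuclideanSpace ℂ (Fin d) →L[ℂ] EuclideanSpace ℂ (Fin d)} (hA : IsSelfAdjoint A)
    (x y : EuclideanSpace ℂ (Fin d)) :
    inner ℂ x (dSandwich f A y) = inner ℂ (dSandwich f A x) y := by
  rw [dSandwich, dSandwich, ← inner_dOp_left, inner_dOp_left f _ y]
  exact (hA.isSymmetric _ _).symm

end DiagonalOperators

section TrigIntegrator

variable {d : ℕ} {h : ℝ} {ω : Fin d → ℝ} {ψ₁ φ : ℝ → ℝ}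
  {A : EuclideanSpace ℂ (Fin d) →L[ℂ] EuclideanSpace ℂ (Fin d)}

local notation "Φ" => fun i => φ (h * ω i)

lemma modEnergy_eq_sum (hfilter : ∀ ξ, ψ₁ ξ = sinc ξ * φ ξ) (q p : EuclideanSpace ℂ (Fin d)) :
    modEnergy h ω ψ₁ φ A q p
      = ∑ i, (1 / 2 * ω i ^ 2 * Complex.normSq (q i) + 1 / 2 * Complex.normSq (p i)
        + 1 / 2 * Real.cos (h * ω i) * (starRingEnd ℂ (q i) * dSandwich Φ A q i).re
        - 1 / 8 * h ^ 2 * sinc (h * ω i) ^ 2 * Complex.normSq (dSandwich Φ A q i)) := by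
  rw [modEnergy, norm_sq_eq_sum_normSq, norm_sq_eq_sum_normSq, norm_sq_eq_sum_normSq,
    inner_re_eq_sum, Finset.mul_sum, Finset.mul_sum, Finset.mul_sum, Finset.mul_sum,
    ← Finset.sum_add_distrib, ← Finset.sum_add_distrib, ← Finset.sum_sub_distrib]
  refine Finset.sum_congr rfl fun i _ => ?_
  simp only [dSandwich, dOp_apply, hfilter, map_mul, Complex.conj_ofReal,
    Complex.normSq_ofReal, Complex.ofReal_mul, mul_assoc, mul_left_comm (starRingEnd ℂ (q i)),
    Complex.re_ofReal_mul]
  ring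

lemma trigStepQ_apply (hfilter : ∀ ξ, ψ₁ ξ = sinc ξ * φ ξ) (q p : EuclideanSpace ℂ (Fin d))
    (i : Fin d) :
    trigStepQ h ω ψ₁ φ A q p i
      = Real.cos (h * ω i) * q i + ((h * sinc (h * ω i) : ℝ) : ℂ) * p i
        - ((h ^ 2 / 2 * sinc (h * ω i) ^ 2 : ℝ) : ℂ) * dSandwich Φ A q i := by
  simp only [trigStepQ, dSandwich, PiLp.add_apply, PiLp.smul_apply, PiLp.neg_apply, dOp_apply,
    hfilter, Complex.real_smul]
  push_cast
  ring

lemma trigStepP_apply (hfilter : ∀ ξ, ψ₁ ξ = sinc ξ * φ ξ) (q p : EuclideanSpace ℂ (Fin d))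
    (i : Fin d) :
    trigStepP h ω ψ₁ φ A q p i
      = ((-(h * ω i ^ 2 * sinc (h * ω i)) : ℝ) : ℂ) * q i + Real.cos (h * ω i) * p i
        - ((h / 2 * Real.cos (h * ω i) * sinc (h * ω i) : ℝ) : ℂ) * dSandwich Φ A q i
        - ((h / 2 * sinc (h * ω i) : ℝ) : ℂ) * dSandwich Φ A (trigStepQ h ω ψ₁ φ A q p) i := by
  simp only [trigStepP, dSandwich, PiLp.add_apply, PiLp.smul_apply, PiLp.neg_apply, dOp_apply,
    hfilter, Complex.real_smul, sin_eq_mul_sinc]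
  push_cast
  ring

lemma modEnergy_trigStep (hfilter : ∀ ξ, ψ₁ ξ = sinc ξ * φ ξ) (hA : IsSelfAdjoint A)
    (q p : EuclideanSpace ℂ (Fin d)) :
    modEnergy h ω ψ₁ φ A (trigStepQ h ω ψ₁ φ A q p) (trigStepP h ω ψ₁ φ A q p)
      = modEnergy h ω ψ₁ φ A q p := by
  have key := Finset.sum_congr rfl fun i (_ : i ∈ Finset.univ) =>
    trigStep_energy_identity (cos_sq_add_mul_sinc_sq (h * ω i))
      (trigStepQ_apply (A := A) hfilter q p i) (trigStepP_apply hfilter q p i)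
  rw [Finset.sum_add_distrib, Finset.sum_add_distrib, ← Finset.mul_sum, ← Finset.mul_sum,
    ← inner_re_eq_sum, ← inner_re_eq_sum, inner_dSandwich_right hA] at key
  rw [modEnergy_eq_sum hfilter, modEnergy_eq_sum hfilter]
  linarith

lemma modEnergy_trigStep_iterate (hfilter : ∀ ξ, ψ₁ ξ = sinc ξ * φ ξ) (hA : IsSelfAdjoint A)
    {q p : ℕ → EuclideanSpace ℂ (Fin d)}
    (hq : ∀ n, q (n + 1) = trigStepQ h ω ψ₁ φ A (q n) (p n))
    (hp : ∀ n, p (n + 1) = trigStepP h ω ψ₁ φ A (q n) (p n)) (n : ℕ) :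
    modEnergy h ω ψ₁ φ A (q n) (p n) = modEnergy h ω ψ₁ φ A (q 0) (p 0) := by
  induction n with
  | zero => rfl
  | succ n ih => rw [hq, hp, modEnergy_trigStep hfilter hA, ih]

end TrigIntegrator

section FilterBounds

variable {d : ℕ} {c : ℝ} {f g : Fin d → ℝ}
  (A : EuclideanSpace ℂ (Fin d) →L[ℂ] EuclideanSpace ℂ (Fin d))

lemma norm_apply_dOp_le (hc : 0 ≤ c) (hg : ∀ i, |g i| ≤ c) (x : EuclideanSpace ℂ (Fin d)) :
    ‖A (dOp g x)‖ ≤ ‖A‖ * (c * ‖x‖) :=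
  (A.le_opNorm _).trans (mul_le_mul_of_nonneg_left (norm_dOp_le hc hg x) (norm_nonneg A))

lemma abs_re_inner_dOp_dOp_apply_le (hc : 0 ≤ c) (hf : ∀ i, |f i| ≤ 1) (hg : ∀ i, |g i| ≤ c)
    (x : EuclideanSpace ℂ (Fin d)) :
    |(inner ℂ (dOp f (dOp g x)) (A (dOp g x))).re| ≤ c ^ 2 * ‖A‖ * ‖x‖ ^ 2 := by
  have hfgx : ‖dOp f (dOp g x)‖ ≤ c * ‖x‖ :=
    (norm_dOp_le zero_le_one hf _).trans (by rw [one_mul]; exact norm_dOp_le hc hg x)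
  calc |(inner ℂ (dOp f (dOp g x)) (A (dOp g x))).re|
      ≤ ‖dOp f (dOp g x)‖ * ‖A (dOp g x)‖ :=
        (Complex.abs_re_le_norm _).trans (norm_inner_le_norm _ _)
    _ ≤ (c * ‖x‖) * (‖A‖ * (c * ‖x‖)) :=
        mul_le_mul hfgx (norm_apply_dOp_le A hc hg x) (norm_nonneg _) (by positivity)
    _ = c ^ 2 * ‖A‖ * ‖x‖ ^ 2 := by ring

lemma norm_dOp_apply_dOp_sq_le (hc : 0 ≤ c) (hf : ∀ i, |f i| ≤ c) (hg : ∀ i, |g i| ≤ c)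
    (x : EuclideanSpace ℂ (Fin d)) :
    ‖dOp f (A (dOp g x))‖ ^ 2 ≤ c ^ 4 * ‖A‖ ^ 2 * ‖x‖ ^ 2 := by
  calc ‖dOp f (A (dOp g x))‖ ^ 2 ≤ (c * (‖A‖ * (c * ‖x‖))) ^ 2 := by
        gcongr
        exact (norm_dOp_le hc hf _).trans
          (mul_le_mul_of_nonneg_left (norm_apply_dOp_le A hc hg x) hc)
    _ = c ^ 4 * ‖A‖ ^ 2 * ‖x‖ ^ 2 := by ring

end FilterBounds

lemma abs_modEnergy_sub_le {d : ℕ} (h : ℝ) (ω : Fin d → ℝ) {ψ₁ φ : ℝ → ℝ} {c₀ : ℝ}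
    (hψ : ∀ ξ, |ψ₁ ξ| ≤ c₀) (hφ : ∀ ξ, |φ ξ| ≤ c₀)
    (A : EuclideanSpace ℂ (Fin d) →L[ℂ] EuclideanSpace ℂ (Fin d))
    (q p : EuclideanSpace ℂ (Fin d)) :
    |modEnergy h ω ψ₁ φ A q p - (1 / 2 * ‖dOp ω q‖ ^ 2 + 1 / 2 * ‖p‖ ^ 2)|
      ≤ (1 / 2 * c₀ ^ 2 * ‖A‖ + 1 / 8 * c₀ ^ 4 * ‖A‖ ^ 2 * h ^ 2) * ‖q‖ ^ 2 := by
  have hc₀ : 0 ≤ c₀ := (abs_nonneg _).trans (hφ 0)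
  have hcross := abs_le.mp <| abs_re_inner_dOp_dOp_apply_le A hc₀
    (fun i => Real.abs_cos_le_one (h * ω i)) (fun i => hφ (h * ω i)) q
  have hcorr := norm_dOp_apply_dOp_sq_le A hc₀ (fun i => hψ (h * ω i)) (fun i => hφ (h * ω i)) q
  have hcorr_le := mul_le_mul_of_nonneg_left hcorr (sq_nonneg h)
  have hcorr_nonneg := mul_nonneg (sq_nonneg h)
    (sq_nonneg ‖dOp (fun i => ψ₁ (h * ω i)) (A (dOp (fun i => φ (h * ω i)) q))‖)
  rw [modEnergy, abs_le]
  constructor <;> linarith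

theorem numerical_solution_regularity_general {d : ℕ} (h : ℝ)
    (ω : Fin d → ℝ) (ψ₁ φ : ℝ → ℝ) (c₀ : ℝ)
    (hfilter : ∀ ξ : ℝ, ψ₁ ξ = sinc ξ * φ ξ)
    (hψ : ∀ ξ : ℝ, |ψ₁ ξ| ≤ c₀) (hφ : ∀ ξ : ℝ, |φ ξ| ≤ c₀)
    (A : EuclideanSpace ℂ (Fin d) →L[ℂ] EuclideanSpace ℂ (Fin d))
    (hA : IsSelfAdjoint A)
    (q p : ℕ → EuclideanSpace ℂ (Fin d))
    (hq : ∀ n : ℕ, q (n + 1) = trigStepQ h ω ψ₁ φ A (q n) (p n))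
    (hp : ∀ n : ℕ, p (n + 1) = trigStepP h ω ψ₁ φ A (q n) (p n)) :
    ∀ n : ℕ,
      (1 / 2) * ‖dOp ω (q n)‖ ^ 2 + (1 / 2) * ‖p n‖ ^ 2
        ≤ (1 / 2) * ‖dOp ω (q 0)‖ ^ 2 + (1 / 2) * ‖p 0‖ ^ 2
          + ((1 / 2) * c₀ ^ 2 * ‖A‖ + (1 / 8) * c₀ ^ 4 * ‖A‖ ^ 2 * h ^ 2)
              * (‖q 0‖ ^ 2 + ‖q n‖ ^ 2) := by
  intro n
  have hconserved := modEnergy_trigStep_iterate hfilter hA hq hp n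
  have hn := (abs_le.mp (abs_modEnergy_sub_le h ω hψ hφ A (q n) (p n))).1
  have h0 := (abs_le.mp (abs_modEnergy_sub_le h ω hψ hφ A (q 0) (p 0))).2
  linarith

/-- Lemma 2, regularity of the numerical solution: in the setting of the exact
conservation of the modified energy,
`½‖Ωq_n‖² + ½‖q̇_n‖² ≤ ½‖Ωq_0‖² + ½‖q̇_0‖² + (C̆ + Ĉh²)(‖q_0‖² + ‖q_n‖²)`. -/
theorem numerical_solution_regularity {d : ℕ} (h : ℝ) (hh0 : 0 < h) (hh1 : h ≤ 1)
    (ω : Fin d → ℝ) (hω : ∀ i, 0 ≤ ω i) (ψ₁ φ : ℝ → ℝ) (c₀ : ℝ)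
    (hfilter : ∀ ξ : ℝ, ψ₁ ξ = sinc ξ * φ ξ)
    (hψ : ∀ ξ : ℝ, |ψ₁ ξ| ≤ c₀) (hφ : ∀ ξ : ℝ, |φ ξ| ≤ c₀)
    (A : EuclideanSpace ℂ (Fin d) →L[ℂ] EuclideanSpace ℂ (Fin d))
    (hA : IsSelfAdjoint A)
    (q p : ℕ → EuclideanSpace ℂ (Fin d))
    (hq : ∀ n : ℕ, q (n + 1) = trigStepQ h ω ψ₁ φ A (q n) (p n))
    (hp : ∀ n : ℕ, p (n + 1) = trigStepP h ω ψ₁ φ A (q n) (p n)) :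
    ∀ n : ℕ,
      (1 / 2) * ‖dOp ω (q n)‖ ^ 2 + (1 / 2) * ‖p n‖ ^ 2
        ≤ (1 / 2) * ‖dOp ω (q 0)‖ ^ 2 + (1 / 2) * ‖p 0‖ ^ 2
          + ((1 / 2) * c₀ ^ 2 * ‖A‖ + (1 / 8) * c₀ ^ 4 * ‖A‖ ^ 2 * h ^ 2)
              * (‖q 0‖ ^ 2 + ‖q n‖ ^ 2) :=
  numerical_solution_regularity_general h ω ψ₁ φ c₀ hfilter hψ hφ A hA q p hq hp
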